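/- (Commutator trick.) Let G ≤ Aut(T) be a fractal group such that for every n ≥ 1 the level stabilizer St_G(n) acts level-transitively on the subtrees rooted at level n. Let s ∈ G, and suppose there exist N ≥ 1 and g ∈ G such that: (i) there are vertices u, w ∈ T with |u| ≤ |w| ≤ N fixed by g, and (ii) g|_u = 1 and g|_w = s. Then for every n ≥ 1 and every vertex v with |v| ≥ n + N, we have s ∈ St_G(n)_v. In particular, if this holds for every element s of a generating set of G, then G is mixing with delay constant N. -/

import Mathlib

open MeasureTheory

namespace ArbGal

/-- Vertices of the `d`-regular rooted tree: the free monoid on `{0, …, d-1}`. -/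
abbrev V (d : ℕ) := List (Fin d)

instance (d : ℕ) : TopologicalSpace (V d) := ⊥

/-- A permutation of the vertices is an automorphism of the rooted tree iff it
preserves the level of vertices and the prefix (ancestor) relation. -/
def IsTreeAut {d : ℕ} (g : Equiv.Perm (V d)) : Prop :=
  (∀ v : V d, (g v).length = v.length) ∧ ∀ u v : V d, u <+: v → g u <+: g v

/-- The automorphism group `Aut(T)` of the `d`-regular rooted tree, realized as a
subgroup of the permutation group of the set of vertices. -/
def treeAutGroup (d : ℕ) : Subgroup (Equiv.Perm (V d)) where
  carrier := {g | IsTreeAut g}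
  one_mem' := ⟨fun _ => rfl, fun _ _ h => h⟩
  mul_mem' := by
    rintro a b ⟨ha1, ha2⟩ ⟨hb1, hb2⟩
    refine ⟨fun v => ?_, fun u v h => ?_⟩
    · simp only [Equiv.Perm.mul_apply, ha1, hb1]
    · simpa only [Equiv.Perm.mul_apply] using ha2 _ _ (hb2 _ _ h)
  inv_mem' := by
    rintro g ⟨h1, h2⟩
    have hlen : ∀ v : V _, (g⁻¹ v).length = v.length := by
      intro v
      have := h1 (g⁻¹ v)
      rw [(show g (g⁻¹ v) = v from Equiv.apply_symm_apply g v)] at this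
      exact this.symm
    refine ⟨hlen, fun u v huv => ?_⟩
    have h3 : (g⁻¹ v).take (g⁻¹ u).length <+: g⁻¹ v := List.take_prefix _ _
    have h4 : g ((g⁻¹ v).take (g⁻¹ u).length) <+: g (g⁻¹ v) := h2 _ _ h3
    rw [(show g (g⁻¹ v) = v from Equiv.apply_symm_apply g v)] at h4
    have hlen4 : (g ((g⁻¹ v).take (g⁻¹ u).length)).length = u.length := by
      rw [h1, List.length_take, hlen, hlen]
      exact min_eq_left huv.length_le
    have h5 : g ((g⁻¹ v).take (g⁻¹ u).length) = u := by
      rcases List.prefix_or_prefix_of_prefix h4 huv with h | h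
      · exact h.eq_of_length hlen4
      · exact (h.eq_of_length hlen4.symm).symm
    have h6 : (g⁻¹ v).take (g⁻¹ u).length = g⁻¹ u := by
      apply g.injective
      rw [h5, (show g (g⁻¹ u) = u from Equiv.apply_symm_apply g u)]
    rw [← h6]
    exact List.take_prefix _ _

/-- The group `Aut(T)`, as a type. -/
abbrev AutT (d : ℕ) := ↥(treeAutGroup d)

/-- `Aut(T)` carries the congruence topology, i.e. the topology of pointwise
convergence on the (discrete) set of vertices. -/
instance (d : ℕ) : TopologicalSpace (Equiv.Perm (V d)) :=
  TopologicalSpace.induced (fun g => (g : V d → V d)) Pi.topologicalSpace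

variable {d : ℕ}

lemma autT_len (g : AutT d) (v : V d) : ((g : Equiv.Perm (V d)) v).length = v.length := g.2.1 v

lemma autT_prefix (g : AutT d) {u v : V d} (h : u <+: v) :
    (g : Equiv.Perm (V d)) u <+: (g : Equiv.Perm (V d)) v := g.2.2 u v h

/-- The underlying function of the section `g|_v`. -/
def secFun (g : AutT d) (v w : V d) : V d := ((g : Equiv.Perm (V d)) (v ++ w)).drop v.length

lemma sec_spec (g : AutT d) (v w : V d) :
    (g : Equiv.Perm (V d)) (v ++ w) = (g : Equiv.Perm (V d)) v ++ secFun g v w := by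
  have h1 : (g : Equiv.Perm (V d)) v <+: (g : Equiv.Perm (V d)) (v ++ w) :=
    autT_prefix g (List.prefix_append v w)
  have h2 := autT_len g v
  have h3 : (g : Equiv.Perm (V d)) v = ((g : Equiv.Perm (V d)) (v ++ w)).take v.length := by
    rw [← h2]; exact List.prefix_iff_eq_take.mp h1
  conv_lhs => rw [← List.take_append_drop v.length ((g : Equiv.Perm (V d)) (v ++ w))]
  rw [← h3]; rfl

lemma coe_inv (g : AutT d) : ((g⁻¹ : AutT d) : Equiv.Perm (V d)) = (g : Equiv.Perm (V d))⁻¹ := rfl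

lemma sec_spec' (g : AutT d) (v w : V d) :
    (g : Equiv.Perm (V d)) (v ++ w)
      = (g : Equiv.Perm (V d)) v ++ List.drop v.length ((g : Equiv.Perm (V d)) (v ++ w)) :=
  sec_spec g v w

/-- The section (state) `g|_v` of a tree automorphism `g` at the vertex `v`; it is
the unique automorphism satisfying `g(v·w) = g(v)·(g|_v)(w)` for all `w`. -/
def sectionAt (g : AutT d) (v : V d) : AutT d :=
  ⟨{ toFun := secFun g v
     invFun := secFun g⁻¹ ((g : Equiv.Perm (V d)) v)
     left_inv := by
       intro w
       show secFun g⁻¹ ((g : Equiv.Perm (V d)) v) (secFun g v w) = w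
       unfold secFun
       rw [coe_inv, ← sec_spec' g v w, (show (g : Equiv.Perm (V d))⁻¹ ((g : Equiv.Perm (V d)) (v ++ w)) = v ++ w from Equiv.symm_apply_apply _ _), autT_len, List.drop_left]
     right_inv := by
       intro w
       show secFun g v (secFun g⁻¹ ((g : Equiv.Perm (V d)) v) w) = w
       unfold secFun
       rw [coe_inv]
       have h := sec_spec' g⁻¹ ((g : Equiv.Perm (V d)) v) w
       rw [coe_inv, (show (g : Equiv.Perm (V d))⁻¹ ((g : Equiv.Perm (V d)) v) = v from Equiv.symm_apply_apply _ _)] at h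
       rw [← h, (show (g : Equiv.Perm (V d)) ((g : Equiv.Perm (V d))⁻¹ ((g : Equiv.Perm (V d)) v ++ w)) = (g : Equiv.Perm (V d)) v ++ w from Equiv.apply_symm_apply _ _), ← autT_len g v, List.drop_left] },
   by
     constructor
     · intro w
       show (secFun g v w).length = w.length
       unfold secFun
       rw [List.length_drop, autT_len, List.length_append]
       omega
     · intro u w huw
       show secFun g v u <+: secFun g v w
       have h1 : v ++ u <+: v ++ w := by
         obtain ⟨c, rfl⟩ := huw
         rw [← List.append_assoc]
         exact List.prefix_append _ _
       have h2 := autT_prefix g h1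
       rw [sec_spec g v u, sec_spec g v w] at h2
       obtain ⟨c, hc⟩ := h2
       rw [List.append_assoc] at hc
       exact ⟨c, List.append_cancel_left hc⟩⟩

/-- The pointwise stabilizer `St(n)` of the `n`-th level, as a subgroup of `Aut(T)`. -/
def levelStab (d n : ℕ) : Subgroup (AutT d) where
  carrier := {g | ∀ v : V d, v.length = n → (g : Equiv.Perm (V d)) v = v}
  one_mem' := fun _ _ => rfl
  mul_mem' := by
    rintro a b ha hb v hv
    show (a : Equiv.Perm (V d)) ((b : Equiv.Perm (V d)) v) = v
    rw [hb v hv, ha v hv]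
  inv_mem' := by
    intro g hg v hv
    show (g : Equiv.Perm (V d))⁻¹ v = v
    conv_lhs => rw [← hg v hv]
    exact Equiv.symm_apply_apply _ _

/-- Two automorphisms agree on the truncated tree `T^m` (have the same image
under `π_m`). -/
def truncEq (d : ℕ) (m : ℕ) (g h : AutT d) : Prop :=
  ∀ w : V d, w.length ≤ m → (g : Equiv.Perm (V d)) w = (h : Equiv.Perm (V d)) w

/-- `St_G(n)_v^m = π_m(G)`: the projection of the `n`-th level stabilizer of `G`
at the vertex `v`, truncated at depth `m`, coincides with `π_m(G)`. -/
def SectModEq (d : ℕ) (G : Subgroup (AutT d)) (n m : ℕ) (v : V d) : Prop :=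
  ∀ a : AutT d,
    (∃ g, g ∈ G ∧ g ∈ levelStab d n ∧ (g : Equiv.Perm (V d)) v = v ∧
        truncEq d m (sectionAt g v) a)
    ↔ (∃ b ∈ G, truncEq d m b a)

/-- `G` is self-similar: all sections of elements of `G` belong to `G`. -/
def SelfSimilar (d : ℕ) (G : Subgroup (AutT d)) : Prop :=
  ∀ g ∈ G, ∀ v : V d, sectionAt g v ∈ G

/-- `G` is level-transitive. -/
def LevelTrans (d : ℕ) (G : Subgroup (AutT d)) : Prop :=
  ∀ v w : V d, v.length = w.length → ∃ g ∈ G, (g : Equiv.Perm (V d)) v = w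

/-- `G` is fractal: self-similar, level-transitive, and every projection
`G_v = φ_v(st_G(v))` is all of `G`. -/
def Fractal (d : ℕ) (G : Subgroup (AutT d)) : Prop :=
  SelfSimilar d G ∧ LevelTrans d G ∧
    ∀ v : V d, ∀ h ∈ G, ∃ g ∈ G, (g : Equiv.Perm (V d)) v = v ∧ sectionAt g v = h

/-- For every `n ≥ 1`, the level stabilizer `St_G(n)` acts level-transitively on the
subtrees rooted at the vertices of level `n`. -/
def StabLevelTrans (d : ℕ) (G : Subgroup (AutT d)) : Prop :=
  ∀ n : ℕ, 1 ≤ n → ∀ v u w : V d, v.length = n → u.length = w.length →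
    ∃ g ∈ G ⊓ levelStab d n, (g : Equiv.Perm (V d)) (v ++ u) = v ++ w

/-- A fractal group `G ≤ Aut(T)` is mixing with delay constant `N`. -/
def MixingWithDelay (d : ℕ) (G : Subgroup (AutT d)) (N : ℕ) : Prop :=
  Fractal d G ∧ StabLevelTrans d G ∧
    ∀ m : ℕ, 1 ≤ m → ∀ n : ℕ, 1 ≤ n → ∀ v : V d, n + N ≤ v.length → SectModEq d G n m v

/-- A fractal group `G ≤ Aut(T)` is mixing: its level stabilizers act
level-transitively below their level, and for all `n, m ≥ 1` there is a delay
`N = N(m)` with `St_G(n)_v^m = π_m(G)` whenever `|v| ≥ n + N`. -/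
def Mixing (d : ℕ) (G : Subgroup (AutT d)) : Prop :=
  Fractal d G ∧ StabLevelTrans d G ∧
    ∀ m : ℕ, 1 ≤ m → ∃ N : ℕ,
      ∀ n : ℕ, 1 ≤ n → ∀ v : V d, n + N ≤ v.length → SectModEq d G n m v

/-- `g` fixes an end of the tree `T`, i.e. an infinite rooted path. -/
def FixesEnd (d : ℕ) (g : AutT d) : Prop :=
  ∃ ω : ℕ → Fin d, ∀ n : ℕ,
    (g : Equiv.Perm (V d)) (List.ofFn (fun i : Fin n => ω i)) = List.ofFn (fun i : Fin n => ω i)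

/-- `X_n(g)`: the number of vertices of level `n` fixed by `g`. -/
noncomputable def Xfix (d n : ℕ) (g : AutT d) : ℕ :=
  Set.ncard {w : Fin n → Fin d |
    (g : Equiv.Perm (V d)) (List.ofFn w) = List.ofFn w}

/-- The Borel σ-algebra on a closed subgroup of `Aut(T)`. -/
instance (d : ℕ) (G : Subgroup (AutT d)) : MeasurableSpace ↥G := borel ↥G

/-- The fixed-point process `{X_n}` of `G`, with respect to the measure `μ` on `G`,
is a martingale. -/
def FPMartingale (d : ℕ) (G : Subgroup (AutT d)) (μ : Measure ↥G) : Prop :=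
  (∀ n : ℕ, 1 ≤ n → Integrable (fun g : ↥G => (Xfix d n (g : AutT d) : ℝ)) μ) ∧
  ∀ n : ℕ, 1 ≤ n → ∀ t : ℕ → ℝ,
    μ {g : ↥G | ∀ i, 1 ≤ i → i ≤ n → (Xfix d i (g : AutT d) : ℝ) = t i} ≠ 0 →
    ∫ g in {g : ↥G | ∀ i, 1 ≤ i → i ≤ n → (Xfix d i (g : AutT d) : ℝ) = t i},
        (Xfix d (n + 1) (g : AutT d) : ℝ) ∂μ
      = t n * (μ {g : ↥G | ∀ i, 1 ≤ i → i ≤ n → (Xfix d i (g : AutT d) : ℝ) = t i}).toReal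

/-!
Conjugating `g` by an element of `G` with trivial section at `y` (fractality provides one)
moves the vertex carrying `s` to the last `|w|` letters `y` of `v = x ++ y`, and fractality
lifts the conjugate to `f ∈ G` fixing `x` with `f|_x` equal to it. Then `f` fixes `v` with
`f|_v = s` and fixes a vertex `z` of the level of `v`, agreeing with `v` up to level `n`, with
`f|_z = 1`. If `a ∈ St_G(n)` maps `z` to `v`, the commutator `⁅f, a⁆ = f a f⁻¹ a⁻¹` lies in
`St_G(n)`, fixes `v`, and its section there is `f|_v · a|_z · (a|_z)⁻¹ = s`. For the mixing
property it remains to note that `St_G(n)_v` is a group containing the generators.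
-/

open scoped commutatorElement

lemma autT_ext {g h : AutT d}
    (H : ∀ v : V d, (g : Equiv.Perm (V d)) v = (h : Equiv.Perm (V d)) v) : g = h :=
  Subtype.ext (Equiv.ext H)

lemma coe_mul_apply (g h : AutT d) (v : V d) :
    ((g * h : AutT d) : Equiv.Perm (V d)) v
      = (g : Equiv.Perm (V d)) ((h : Equiv.Perm (V d)) v) := rfl

lemma coe_inv_apply_of_apply_eq {g : AutT d} {v w : V d} (h : (g : Equiv.Perm (V d)) v = w) :
    ((g⁻¹ : AutT d) : Equiv.Perm (V d)) w = v := by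
  rw [coe_inv, ← h]; exact Equiv.symm_apply_apply _ _

lemma apply_append (g : AutT d) (v w : V d) :
    (g : Equiv.Perm (V d)) (v ++ w)
      = (g : Equiv.Perm (V d)) v ++ ((sectionAt g v : AutT d) : Equiv.Perm (V d)) w :=
  sec_spec g v w

lemma sectionAt_one (v : V d) : sectionAt (1 : AutT d) v = 1 :=
  autT_ext fun _ => List.drop_left

lemma sectionAt_mul (p q : AutT d) (v : V d) :
    sectionAt (p * q) v = sectionAt p ((q : Equiv.Perm (V d)) v) * sectionAt q v := by
  refine autT_ext fun w => List.append_cancel_left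
    (as := ((p * q : AutT d) : Equiv.Perm (V d)) v) ?_
  rw [← apply_append, coe_mul_apply, coe_mul_apply, apply_append q, apply_append p]
  rfl

lemma sectionAt_inv_of_apply_eq {g : AutT d} {v w : V d} (h : (g : Equiv.Perm (V d)) v = w) :
    sectionAt g⁻¹ w = (sectionAt g v)⁻¹ := by
  have := sectionAt_mul g⁻¹ g v
  rw [inv_mul_cancel, sectionAt_one, h] at this
  exact eq_inv_of_mul_eq_one_left this.symm

lemma sectionAt_append (g : AutT d) (v w : V d) :
    sectionAt g (v ++ w) = sectionAt (sectionAt g v) w := by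
  refine autT_ext fun z => ?_
  show secFun g (v ++ w) z = secFun (sectionAt g v) w z
  rw [secFun, List.append_assoc, sec_spec g v (w ++ z), List.length_append, ← autT_len g v,
    List.drop_length_add_append]
  rfl

lemma levelStab_normal (n : ℕ) : (levelStab d n).Normal where
  conj_mem a ha f p hp := by
    rw [coe_mul_apply, coe_mul_apply, ha _ (by rw [autT_len, hp])]
    exact Equiv.apply_symm_apply _ _

lemma apply_conj_and_sectionAt_conj {g r : AutT d} {y w : V d}
    (hr : (r : Equiv.Perm (V d)) y = w) (hg : (g : Equiv.Perm (V d)) w = w) :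
    ((r⁻¹ * g * r : AutT d) : Equiv.Perm (V d)) y = y ∧
      sectionAt (r⁻¹ * g * r) y = (sectionAt r y)⁻¹ * sectionAt g w * sectionAt r y := by
  have hgr : ((g * r : AutT d) : Equiv.Perm (V d)) y = w := by rw [coe_mul_apply, hr, hg]
  refine ⟨by rw [mul_assoc, coe_mul_apply, hgr, coe_inv_apply_of_apply_eq hr], ?_⟩
  rw [mul_assoc, sectionAt_mul, hgr, sectionAt_inv_of_apply_eq hr, sectionAt_mul, hr, mul_assoc]

lemma apply_commutator_and_sectionAt_commutator {f a : AutT d} {v z : V d}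
    (hfv : (f : Equiv.Perm (V d)) v = v) (hfz : (f : Equiv.Perm (V d)) z = z)
    (hfz₁ : sectionAt f z = 1) (ha : (a : Equiv.Perm (V d)) z = v) :
    ((⁅f, a⁆ : AutT d) : Equiv.Perm (V d)) v = v ∧ sectionAt ⁅f, a⁆ v = sectionAt f v := by
  have hainv := coe_inv_apply_of_apply_eq ha
  have hfinv := coe_inv_apply_of_apply_eq hfz
  refine ⟨?_, ?_⟩
  · simp only [commutatorElement_def, coe_mul_apply, hainv, hfinv, ha, hfv]
  · simp only [commutatorElement_def, sectionAt_mul, coe_mul_apply, hainv, hfinv, ha,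
      sectionAt_inv_of_apply_eq ha, sectionAt_inv_of_apply_eq hfz, hfz₁, inv_one, one_mul,
      mul_assoc, mul_inv_cancel, mul_one]

lemma Fractal.exists_apply_eq_sectionAt_eq_one {G : Subgroup (AutT d)} (hG : Fractal d G)
    {y w : V d} (hyw : y.length = w.length) :
    ∃ r ∈ G, (r : Equiv.Perm (V d)) y = w ∧ sectionAt r y = 1 := by
  obtain ⟨hself, htrans, hfrac⟩ := hG
  obtain ⟨r, hrG, hry⟩ := htrans y w hyw
  obtain ⟨ρ, hρG, hρy, hρsec⟩ := hfrac y (sectionAt r y)⁻¹ (inv_mem (hself r hrG y))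
  refine ⟨r * ρ, mul_mem hrG hρG, by rw [coe_mul_apply, hρy, hry], ?_⟩
  rw [sectionAt_mul, hρy, hρsec, mul_inv_cancel]

lemma Fractal.exists_fixing_sectionAt_eq_of_length_eq {G : Subgroup (AutT d)} (hG : Fractal d G)
    {g s : AutT d} (hg : g ∈ G) {u w y : V d} (hgu : (g : Equiv.Perm (V d)) u = u)
    (hgw : (g : Equiv.Perm (V d)) w = w) (hgu₁ : sectionAt g u = 1) (hgws : sectionAt g w = s)
    (hyw : y.length = w.length) :
    ∃ g' ∈ G, ∃ u' : V d, u'.length = u.length ∧ (g' : Equiv.Perm (V d)) u' = u' ∧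
      (g' : Equiv.Perm (V d)) y = y ∧ sectionAt g' u' = 1 ∧ sectionAt g' y = s := by
  obtain ⟨r, hrG, hry, hry₁⟩ := hG.exists_apply_eq_sectionAt_eq_one hyw
  have hru : (r : Equiv.Perm (V d)) (((r⁻¹ : AutT d) : Equiv.Perm (V d)) u) = u := by
    rw [coe_inv]; exact Equiv.apply_symm_apply _ _
  obtain ⟨hu'fix, hu'sec⟩ := apply_conj_and_sectionAt_conj hru hgu
  obtain ⟨hyfix, hysec⟩ := apply_conj_and_sectionAt_conj hry hgw
  refine ⟨r⁻¹ * g * r, mul_mem (mul_mem (inv_mem hrG) hg) hrG, _, autT_len _ u, hu'fix, hyfix,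
    ?_, ?_⟩
  · rw [hu'sec, hgu₁, mul_one, inv_mul_cancel]
  · rw [hysec, hry₁, hgws, inv_one, one_mul, mul_one]

lemma StabLevelTrans.exists_apply_append {G : Subgroup (AutT d)} (hst : StabLevelTrans d G)
    {n : ℕ} (hn : 1 ≤ n) {x t t' : V d} (hnx : n ≤ x.length) (ht : t.length = t'.length) :
    ∃ a ∈ G ⊓ levelStab d n, (a : Equiv.Perm (V d)) (x ++ t) = x ++ t' := by
  rw [← List.take_append_drop n x, List.append_assoc, List.append_assoc]
  exact hst n hn _ _ _ (List.length_take_of_le hnx) (by simp [ht])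

lemma exists_mem_levelStab_sectionAt_eq {G : Subgroup (AutT d)} (hfr : Fractal d G)
    (hst : StabLevelTrans d G) {g s : AutT d} (hg : g ∈ G) {u w : V d}
    (huw : u.length ≤ w.length) (hgu : (g : Equiv.Perm (V d)) u = u)
    (hgw : (g : Equiv.Perm (V d)) w = w) (hgu₁ : sectionAt g u = 1) (hgws : sectionAt g w = s)
    {n : ℕ} (hn : 1 ≤ n) {x y : V d} (hnx : n ≤ x.length) (hyw : y.length = w.length) :
    ∃ h ∈ G, h ∈ levelStab d n ∧ (h : Equiv.Perm (V d)) (x ++ y) = x ++ y ∧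
      sectionAt h (x ++ y) = s := by
  obtain ⟨g', hg'G, u', hu'len, hg'u', hg'y, hg'u'₁, hg'ys⟩ :=
    hfr.exists_fixing_sectionAt_eq_of_length_eq hg hgu hgw hgu₁ hgws hyw
  obtain ⟨f, hfG, hfx, hfxg'⟩ := hfr.2.2 x g' hg'G
  set z := x ++ (u' ++ y.drop u.length)
  have hfv : (f : Equiv.Perm (V d)) (x ++ y) = x ++ y := by rw [apply_append, hfx, hfxg', hg'y]
  have hfz : (f : Equiv.Perm (V d)) z = z := by
    rw [apply_append, hfx, hfxg', apply_append, hg'u', hg'u'₁]; rfl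
  have hfz₁ : sectionAt f z = 1 := by
    rw [sectionAt_append, hfxg', sectionAt_append, hg'u'₁, sectionAt_one]
  obtain ⟨a, haG, haz⟩ := hst.exists_apply_append (t := u' ++ y.drop u.length) (t' := y) hn hnx
    (by simp only [List.length_append, List.length_drop]; omega)
  obtain ⟨hcv, hcsec⟩ := apply_commutator_and_sectionAt_commutator hfv hfz hfz₁ haz
  refine ⟨⁅f, a⁆, ?_, ?_, hcv, by rw [hcsec, sectionAt_append, hfxg', hg'ys]⟩
  · rw [commutatorElement_def]
    exact mul_mem (mul_mem (mul_mem hfG haG.1) (inv_mem hfG)) (inv_mem haG.1)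
  · rw [commutatorElement_def]
    exact mul_mem ((levelStab_normal n).conj_mem a haG.2 f) (inv_mem haG.2)

/-- `St_G(n)_v` in the paper's notation. -/
def levelStabSections (G : Subgroup (AutT d)) (n : ℕ) (v : V d) : Subgroup (AutT d) where
  carrier := {c | ∃ h ∈ G, h ∈ levelStab d n ∧ (h : Equiv.Perm (V d)) v = v ∧ sectionAt h v = c}
  one_mem' := ⟨1, one_mem G, one_mem _, rfl, sectionAt_one v⟩
  mul_mem' := by
    rintro _ _ ⟨h₁, hG₁, hS₁, hv₁, rfl⟩ ⟨h₂, hG₂, hS₂, hv₂, rfl⟩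
    exact ⟨h₁ * h₂, mul_mem hG₁ hG₂, mul_mem hS₁ hS₂, by rw [coe_mul_apply, hv₂, hv₁],
      by rw [sectionAt_mul, hv₂]⟩
  inv_mem' := by
    rintro _ ⟨h, hG, hS, hv, rfl⟩
    exact ⟨h⁻¹, inv_mem hG, inv_mem hS, coe_inv_apply_of_apply_eq hv,
      sectionAt_inv_of_apply_eq hv⟩

theorem commutator_trick_general
    (d : ℕ) (G : Subgroup (AutT d))
    (hfr : Fractal d G) (hst : StabLevelTrans d G) :
    (∀ s ∈ G, ∀ N : ℕ, 1 ≤ N →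
      (∃ g ∈ G, ∃ u w : V d, u.length ≤ w.length ∧ w.length ≤ N ∧
          (g : Equiv.Perm (V d)) u = u ∧ (g : Equiv.Perm (V d)) w = w ∧
          sectionAt g u = 1 ∧ sectionAt g w = s) →
      ∀ n : ℕ, 1 ≤ n → ∀ v : V d, n + N ≤ v.length →
        ∃ h ∈ G, h ∈ levelStab d n ∧ (h : Equiv.Perm (V d)) v = v ∧ sectionAt h v = s)
    ∧
    (∀ N : ℕ, 1 ≤ N → ∀ S : Set (AutT d), Subgroup.closure S = G →
      (∀ s ∈ S, ∃ g ∈ G, ∃ u w : V d, u.length ≤ w.length ∧ w.length ≤ N ∧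
          (g : Equiv.Perm (V d)) u = u ∧ (g : Equiv.Perm (V d)) w = w ∧
          sectionAt g u = 1 ∧ sectionAt g w = s) →
      MixingWithDelay d G N) := by
  have mem_sections : ∀ s N, (∃ g ∈ G, ∃ u w : V d, u.length ≤ w.length ∧ w.length ≤ N ∧
      (g : Equiv.Perm (V d)) u = u ∧ (g : Equiv.Perm (V d)) w = w ∧
      sectionAt g u = 1 ∧ sectionAt g w = s) →
      ∀ n : ℕ, 1 ≤ n → ∀ v : V d, n + N ≤ v.length → s ∈ levelStabSections G n v := by
    rintro s N ⟨g, hg, u, w, huw, hwN, hgu, hgw, hgu₁, hgws⟩ n hn v hv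
    rw [← List.take_append_drop (v.length - w.length) v]
    exact exists_mem_levelStab_sectionAt_eq hfr hst hg huw hgu hgw hgu₁ hgws hn
      (by rw [List.length_take]; omega) (by rw [List.length_drop]; omega)
  refine ⟨fun s _ N _ hex => mem_sections s N hex, fun N _ S hSG hS => ⟨hfr, hst, ?_⟩⟩
  intro m _ n hn v hv a
  refine ⟨fun ⟨g, hg, _, _, hga⟩ => ⟨sectionAt g v, hfr.1 g hg v, hga⟩, ?_⟩
  rintro ⟨b, hb, hba⟩
  have hGle : G ≤ levelStabSections G n v := hSG.symm.le.trans <|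
    (Subgroup.closure_le _).2 fun s hs => mem_sections s N (hS s hs) n hn v hv
  obtain ⟨h, hG, hSt, hhv, rfl⟩ := hGle hb
  exact ⟨h, hG, hSt, hhv, hba⟩

/-- **Commutator trick.** Let `G ≤ Aut(T)` be a fractal group such that
for every `n ≥ 1` the level stabilizer `St_G(n)` acts level-transitively on the subtrees
rooted at level `n`.  If for `s ∈ G` there are `N ≥ 1` and `g ∈ G` having vertices
`u, w` with `|u| ≤ |w| ≤ N` fixed by `g` and with sections `g|_u = 1` and `g|_w = s`,
then `s ∈ St_G(n)_v` for every `n ≥ 1` and every `v` with `|v| ≥ n + N`.  In particular,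
if this holds for every `s` in a generating set of `G`, then `G` is mixing with delay
constant `N`. -/
theorem commutator_trick
    (d : ℕ) (hd : 2 ≤ d) (G : Subgroup (AutT d))
    (hfr : Fractal d G) (hst : StabLevelTrans d G) :
    (∀ s ∈ G, ∀ N : ℕ, 1 ≤ N →
      (∃ g ∈ G, ∃ u w : V d, u.length ≤ w.length ∧ w.length ≤ N ∧
          (g : Equiv.Perm (V d)) u = u ∧ (g : Equiv.Perm (V d)) w = w ∧
          sectionAt g u = 1 ∧ sectionAt g w = s) →
      ∀ n : ℕ, 1 ≤ n → ∀ v : V d, n + N ≤ v.length →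
        ∃ h ∈ G, h ∈ levelStab d n ∧ (h : Equiv.Perm (V d)) v = v ∧ sectionAt h v = s)
    ∧
    (∀ N : ℕ, 1 ≤ N → ∀ S : Set (AutT d), Subgroup.closure S = G →
      (∀ s ∈ S, ∃ g ∈ G, ∃ u w : V d, u.length ≤ w.length ∧ w.length ≤ N ∧
          (g : Equiv.Perm (V d)) u = u ∧ (g : Equiv.Perm (V d)) w = w ∧
          sectionAt g u = 1 ∧ sectionAt g w = s) →
      MixingWithDelay d G N) :=
  commutator_trick_general d G hfr hst

end ArbGal
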